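/- Let G be a finite simple graph containing a fan F on distinct vertices w, u_1, …, u_r (r ≥ 2) with cutset edges j = (u_0, u_1), k = (x, w), l = (u_r, u_{r+1}). Then for every Hamiltonian cycle τ of G that contains both j and l, there exists an index i with 1 ≤ i ≤ r−1 such that the edges of τ with both endpoints in {w, u_1, …, u_r} are exactly the rim edges (u_1, u_2), …, (u_{r−1}, u_r) with (u_i, u_{i+1}) removed, together with the two spokes (u_i, w) and (w, u_{i+1}); that is, τ traverses F by a subsequence of the form u_1, …, u_i, w, u_{i+1}, …, u_r (a centre-traversal). -/

import Mathlib

/-!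
A cycle meets every vertex in exactly two edges. The rim vertex `u p` has only the three
neighbours `w`, `u (p - 1)`, `u (p + 1)`, so `τ` omits the spoke at `u p` exactly when it uses
both rim edges at `u p` (the end "rim edges" being `j` and `l`, which `τ` uses). The centre `w`
has a single neighbour `x` outside the fan, so `τ` uses one or two spokes. A spoke with no spoke
at a neighbouring index would put three edges of `τ` at its rim vertex; hence the spokes are at
two consecutive indices `i, i + 1`, the rim edge between them is omitted and every other rim
edge is used.
-/

open Set SimpleGraph

namespace SimpleGraph.Walk.IsCycle

variable {V : Type*} {G : SimpleGraph V} {u v : V} {c : G.Walk u u}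

theorem exists_ne_forall_mem_edges_iff (hc : c.IsCycle) (hv : v ∈ c.support) :
    ∃ a b, a ≠ b ∧ ∀ y, s(v, y) ∈ c.edges ↔ y = a ∨ y = b := by
  obtain ⟨a, b, hab, h⟩ := Set.ncard_eq_two.mp (hc.ncard_neighborSet_toSubgraph_eq_two hv)
  refine ⟨a, b, hab, fun y => ?_⟩
  rw [← adj_toSubgraph_iff_mem_edges, ← Subgraph.mem_neighborSet, h]
  rfl

theorem notMem_edges_iff_of_forall_adj (hc : c.IsCycle) (hv : v ∈ c.support) {a b d : V}
    (hab : a ≠ b) (had : a ≠ d) (hbd : b ≠ d) (hN : ∀ y, G.Adj v y → y = a ∨ y = b ∨ y = d) :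
    s(v, a) ∉ c.edges ↔ s(v, b) ∈ c.edges ∧ s(v, d) ∈ c.edges := by
  obtain ⟨p, q, hpq, h⟩ := hc.exists_ne_forall_mem_edges_iff hv
  have hp := hN p (c.adj_of_mem_edges ((h p).mpr (Or.inl rfl)))
  have hq := hN q (c.adj_of_mem_edges ((h q).mpr (Or.inr rfl)))
  rw [h, h, h]
  grind

end SimpleGraph.Walk.IsCycle

section RimPattern

-- `S p`: the spoke at `u p` is used; `R p`: the rim edge `(u p, u (p + 1))` is used.
variable {r : ℕ} {S R : ℕ → Prop}

theorem rim_of_not_spoke (hdeg : ∀ p ∈ Icc 1 r, ¬S p ↔ R (p - 1) ∧ R p) {p q : ℕ}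
    (hq : q ∈ Icc 1 r) (hSq : ¬S q) (hpq : q = p ∨ q = p + 1) : R p := by
  have hR := (hdeg q hq).mp hSq
  rcases hpq with rfl | rfl
  · exact hR.2
  · simpa using hR.1

theorem exists_adjacent_spoke (hR0 : R 0) (hRr : R r)
    (hdeg : ∀ p ∈ Icc 1 r, ¬S p ↔ R (p - 1) ∧ R p) {p : ℕ} (hp : p ∈ Icc 1 r) (hSp : S p) :
    ∃ q ∈ Icc 1 r, S q ∧ (q + 1 = p ∨ q = p + 1) := by
  by_contra! hfree
  have hp' := mem_Icc.mp hp
  have hleft : R (p - 1) := by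
    rcases eq_or_ne p 1 with rfl | hp1
    · exact hR0
    · have hq : p - 1 ∈ Icc 1 r := mem_Icc.mpr ⟨by omega, by omega⟩
      exact rim_of_not_spoke hdeg hq (fun h => (hfree _ hq h).1 (by omega)) (Or.inl rfl)
  have hright : R p := by
    rcases eq_or_ne p r with rfl | hpr
    · exact hRr
    · have hq : p + 1 ∈ Icc 1 r := mem_Icc.mpr ⟨by omega, by omega⟩
      exact rim_of_not_spoke hdeg hq (fun h => (hfree _ hq h).2 rfl) (Or.inr rfl)
  exact (hdeg p hp).mpr ⟨hleft, hright⟩ hSp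

theorem exists_centre_traversal (hR0 : R 0) (hRr : R r)
    (hdeg : ∀ p ∈ Icc 1 r, ¬S p ↔ R (p - 1) ∧ R p) {a b : ℕ} (ha : a ∈ Icc 1 r)
    (hb : b ∈ Icc 1 r) (hS : ∀ p ∈ Icc 1 r, S p ↔ p = a ∨ p = b) :
    ∃ i ∈ Icc 1 (r - 1), (∀ p ∈ Icc 1 r, S p ↔ p = i ∨ p = i + 1) ∧
      ∀ p ∈ Icc 1 (r - 1), R p ↔ p ≠ i := by
  obtain ⟨q, hq, hSq, hqa⟩ :=
    exists_adjacent_spoke hR0 hRr hdeg ha ((hS a ha).mpr (Or.inl rfl))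
  have hab : b + 1 = a ∨ b = a + 1 := by
    rcases (hS q hq).mp hSq with rfl | rfl <;> omega
  have ha' := mem_Icc.mp ha
  have hb' := mem_Icc.mp hb
  have hSi : ∀ p ∈ Icc 1 r, S p ↔ p = min a b ∨ p = min a b + 1 := by
    intro p hp
    rw [hS p hp]
    omega
  refine ⟨min a b, mem_Icc.mpr ⟨by omega, by omega⟩, hSi, fun p hp => ?_⟩
  have hp' := mem_Icc.mp hp
  have hfree : ∀ q ∈ Icc 1 r, q ≠ min a b → q ≠ min a b + 1 → ¬S q := by
    intro q hq hqi hqi'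
    rw [hSi q hq]
    omega
  constructor
  · rintro hR rfl
    have hleft : R (min a b - 1) := by
      rcases eq_or_ne (min a b) 1 with h1 | h1
      · rw [h1]
        exact hR0
      · exact rim_of_not_spoke hdeg (q := min a b - 1) (mem_Icc.mpr ⟨by omega, by omega⟩)
          (hfree _ (mem_Icc.mpr ⟨by omega, by omega⟩) (by omega) (by omega)) (Or.inl rfl)
    exact (hdeg _ (mem_Icc.mpr ⟨by omega, by omega⟩)).mpr ⟨hleft, hR⟩
      ((hSi _ (mem_Icc.mpr ⟨by omega, by omega⟩)).mpr (Or.inl rfl))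
  · intro hpi
    rcases eq_or_ne p (min a b + 1) with hpi' | hpi'
    · exact rim_of_not_spoke hdeg (q := p + 1) (mem_Icc.mpr ⟨by omega, by omega⟩)
        (hfree _ (mem_Icc.mpr ⟨by omega, by omega⟩) (by omega) (by omega)) (Or.inr rfl)
    · exact rim_of_not_spoke hdeg (q := p) (mem_Icc.mpr ⟨by omega, by omega⟩)
        (hfree _ (mem_Icc.mpr ⟨by omega, by omega⟩) hpi hpi') (Or.inl rfl)

end RimPattern

structure IsFan {V : Type*} (G : SimpleGraph V) (r : ℕ) (w x : V) (u : ℕ → V) (F : Set V) :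
    Prop where
  two_le : 2 ≤ r
  eq_insert : F = insert w (u '' Icc 1 r)
  injOn : ∀ i ∈ Icc 1 r, ∀ j ∈ Icc 1 r, u i = u j → i = j
  u_ne_center : ∀ i ∈ Icc 1 r, u i ≠ w
  u_zero_notMem : u 0 ∉ F
  x_notMem : x ∉ F
  u_succ_notMem : u (r + 1) ∉ F
  adj_inside : ∀ a ∈ F, ∀ b ∈ F, (G.Adj a b ↔
    (∃ i ∈ Icc 1 r, (a = w ∧ b = u i) ∨ (a = u i ∧ b = w)) ∨
    (∃ i ∈ Icc 1 (r - 1), (a = u i ∧ b = u (i + 1)) ∨ (a = u (i + 1) ∧ b = u i)))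
  adj_outside : ∀ a ∈ F, ∀ b ∉ F, (G.Adj a b ↔
    (a = u 1 ∧ b = u 0) ∨ (a = w ∧ b = x) ∨ (a = u r ∧ b = u (r + 1)))

namespace IsFan

variable {V : Type*} {G : SimpleGraph V} {r : ℕ} {w x : V} {u : ℕ → V} {F : Set V}
  {p : ℕ} {y : V}

theorem center_mem (hfan : IsFan G r w x u F) : w ∈ F :=
  hfan.eq_insert ▸ mem_insert w _

theorem u_mem (hfan : IsFan G r w x u F) (hp : p ∈ Icc 1 r) : u p ∈ F :=
  hfan.eq_insert ▸ mem_insert_of_mem w (mem_image_of_mem u hp)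

theorem u_ne_center_of_le (hfan : IsFan G r w x u F) (hp : p ≤ r + 1) : u p ≠ w := by
  rcases Nat.eq_zero_or_pos p with rfl | hp0
  · exact fun h => hfan.u_zero_notMem (h ▸ hfan.center_mem)
  rcases eq_or_ne p (r + 1) with rfl | hpr
  · exact fun h => hfan.u_succ_notMem (h ▸ hfan.center_mem)
  exact hfan.u_ne_center p (mem_Icc.mpr ⟨hp0, by omega⟩)

theorem u_ne_x (hfan : IsFan G r w x u F) (hp : p ∈ Icc 1 r) : u p ≠ x :=
  fun h => hfan.x_notMem (h ▸ hfan.u_mem hp)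

theorem u_pred_ne_u_succ (hfan : IsFan G r w x u F) (hp : p ∈ Icc 1 r) :
    u (p - 1) ≠ u (p + 1) := by
  have hp' := mem_Icc.mp hp
  have hr := hfan.two_le
  intro h
  rcases eq_or_ne p 1 with rfl | hp1
  · exact hfan.u_zero_notMem (h ▸ hfan.u_mem (mem_Icc.mpr ⟨by omega, hr⟩))
  rcases eq_or_ne p r with rfl | hpr
  · exact hfan.u_succ_notMem (h ▸ hfan.u_mem (mem_Icc.mpr ⟨by omega, by omega⟩))
  have := hfan.injOn _ (mem_Icc.mpr ⟨by omega, by omega⟩) _ (mem_Icc.mpr ⟨by omega, by omega⟩) h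
  omega

theorem adj_center (hfan : IsFan G r w x u F) (h : G.Adj w y) :
    y = x ∨ ∃ m ∈ Icc 1 r, y = u m := by
  by_cases hy : y ∈ F
  · rw [hfan.eq_insert] at hy
    rcases hy with rfl | ⟨m, hm, rfl⟩
    · exact absurd h G.irrefl
    · exact Or.inr ⟨m, hm, rfl⟩
  · rcases (hfan.adj_outside w hfan.center_mem y hy).mp h with ⟨h1, -⟩ | ⟨-, rfl⟩ | ⟨h1, -⟩
    · exact absurd h1.symm (hfan.u_ne_center_of_le (by omega))
    · exact Or.inl rfl
    · exact absurd h1.symm (hfan.u_ne_center_of_le (by omega))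

theorem adj_rim (hfan : IsFan G r w x u F) (hp : p ∈ Icc 1 r) (h : G.Adj (u p) y) :
    y = w ∨ y = u (p - 1) ∨ y = u (p + 1) := by
  have hp' := mem_Icc.mp hp
  have hinj := hfan.injOn p hp
  by_cases hy : y ∈ F
  · rcases (hfan.adj_inside _ (hfan.u_mem hp) y hy).mp h with
      ⟨m, hm, ⟨h1, -⟩ | ⟨-, rfl⟩⟩ | ⟨m, hm, ⟨h1, rfl⟩ | ⟨h1, rfl⟩⟩
    · exact absurd h1 (hfan.u_ne_center p hp)
    · exact Or.inl rfl
    · have hm' := mem_Icc.mp hm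
      obtain rfl := hinj m (mem_Icc.mpr ⟨by omega, by omega⟩) h1
      exact Or.inr (Or.inr rfl)
    · have hm' := mem_Icc.mp hm
      obtain rfl := hinj (m + 1) (mem_Icc.mpr ⟨by omega, by omega⟩) h1
      exact Or.inr (Or.inl rfl)
  · rcases (hfan.adj_outside _ (hfan.u_mem hp) y hy).mp h with
      ⟨h1, rfl⟩ | ⟨h1, -⟩ | ⟨h1, rfl⟩
    · obtain rfl := hinj 1 (mem_Icc.mpr ⟨le_rfl, by omega⟩) h1
      exact Or.inr (Or.inl rfl)
    · exact absurd h1 (hfan.u_ne_center p hp)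
    · obtain rfl := hinj r (mem_Icc.mpr ⟨by omega, le_rfl⟩) h1
      exact Or.inr (Or.inr rfl)

theorem adj_of_mem (hfan : IsFan G r w x u F) {a b : V} (ha : a ∈ F) (hb : b ∈ F)
    (h : G.Adj a b) :
    (∃ m ∈ Icc 1 r, s(a, b) = s(u m, w)) ∨ ∃ m ∈ Icc 1 (r - 1), s(a, b) = s(u m, u (m + 1)) := by
  rcases (hfan.adj_inside a ha b hb).mp h with
    ⟨m, hm, ⟨rfl, rfl⟩ | ⟨rfl, rfl⟩⟩ | ⟨m, hm, ⟨rfl, rfl⟩ | ⟨rfl, rfl⟩⟩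
  · exact Or.inl ⟨m, hm, Sym2.eq_swap⟩
  · exact Or.inl ⟨m, hm, rfl⟩
  · exact Or.inr ⟨m, hm, rfl⟩
  · exact Or.inr ⟨m, hm, Sym2.eq_swap⟩

section Cycle

variable {v₀ : V} {τ : G.Walk v₀ v₀}

theorem spoke_notMem_edges_iff (hfan : IsFan G r w x u F) (hτ : τ.IsCycle)
    (hF : ∀ v ∈ F, v ∈ τ.support) (hp : p ∈ Icc 1 r) :
    s(u p, w) ∉ τ.edges ↔ s(u (p - 1), u p) ∈ τ.edges ∧ s(u p, u (p + 1)) ∈ τ.edges := by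
  have hp' := mem_Icc.mp hp
  rw [Sym2.eq_swap (a := u (p - 1))]
  exact hτ.notMem_edges_iff_of_forall_adj (hF _ (hfan.u_mem hp))
    (hfan.u_ne_center_of_le (by omega)).symm (hfan.u_ne_center_of_le (by omega)).symm
    (hfan.u_pred_ne_u_succ hp) (fun y hy => hfan.adj_rim hp hy)

theorem exists_spoke_indices (hfan : IsFan G r w x u F) (hτ : τ.IsCycle)
    (hF : ∀ v ∈ F, v ∈ τ.support) :
    ∃ a ∈ Icc 1 r, ∃ b ∈ Icc 1 r, ∀ p ∈ Icc 1 r, s(u p, w) ∈ τ.edges ↔ p = a ∨ p = b := by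
  obtain ⟨α, β, hαβ, hw⟩ := hτ.exists_ne_forall_mem_edges_iff (hF w hfan.center_mem)
  have hα := hfan.adj_center (τ.adj_of_mem_edges ((hw α).mpr (Or.inl rfl)))
  have hβ := hfan.adj_center (τ.adj_of_mem_edges ((hw β).mpr (Or.inr rfl)))
  have hspoke : ∀ p ∈ Icc 1 r, s(u p, w) ∈ τ.edges ↔ u p = α ∨ u p = β := fun p _ => by
    rw [Sym2.eq_swap, hw]
  have hidx : ∀ m ∈ Icc 1 r, ∀ p ∈ Icc 1 r, u p = u m ↔ p = m :=
    fun m hm p hp => ⟨hfan.injOn p hp m hm, fun h => h ▸ rfl⟩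
  rcases hα with rfl | ⟨m, hm, rfl⟩ <;> rcases hβ with rfl | ⟨n, hn, rfl⟩
  · exact absurd rfl hαβ
  · exact ⟨n, hn, n, hn, fun p hp => by simp [hspoke p hp, hidx n hn p hp, hfan.u_ne_x hp]⟩
  · exact ⟨m, hm, m, hm, fun p hp => by simp [hspoke p hp, hidx m hm p hp, hfan.u_ne_x hp]⟩
  · exact ⟨m, hm, n, hn, fun p hp => by rw [hspoke p hp, hidx m hm p hp, hidx n hn p hp]⟩

end Cycle

theorem inside_edges_iff {v₀ : V} {τ : G.Walk v₀ v₀} (hfan : IsFan G r w x u F) {i : ℕ}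
    (hS : ∀ p ∈ Icc 1 r, s(u p, w) ∈ τ.edges ↔ p = i ∨ p = i + 1)
    (hR : ∀ p ∈ Icc 1 (r - 1), s(u p, u (p + 1)) ∈ τ.edges ↔ p ≠ i)
    (hi : i ∈ Icc 1 (r - 1)) (e : Sym2 V) :
    (e ∈ τ.edges ∧ ∀ z ∈ e, z ∈ F) ↔
      (e = s(u i, w) ∨ e = s(w, u (i + 1)) ∨
        ∃ p ∈ Icc 1 (r - 1), p ≠ i ∧ e = s(u p, u (p + 1))) := by
  have hi' := mem_Icc.mp hi
  have hrim : ∀ p ∈ Icc 1 (r - 1), p ∈ Icc 1 r ∧ p + 1 ∈ Icc 1 r := fun p hp => by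
    have := mem_Icc.mp hp
    exact ⟨mem_Icc.mpr ⟨by omega, by omega⟩, mem_Icc.mpr ⟨by omega, by omega⟩⟩
  constructor
  · rintro ⟨heτ, heF⟩
    induction e using Sym2.ind with
    | _ a b =>
      rcases hfan.adj_of_mem (heF a (Sym2.mem_mk_left a b)) (heF b (Sym2.mem_mk_right a b))
        (τ.adj_of_mem_edges heτ) with ⟨m, hm, he⟩ | ⟨m, hm, he⟩
      · rw [he] at heτ ⊢
        rcases (hS m hm).mp heτ with rfl | rfl
        · exact Or.inl rfl
        · exact Or.inr (Or.inl Sym2.eq_swap)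
      · rw [he] at heτ ⊢
        exact Or.inr (Or.inr ⟨m, hm, (hR m hm).mp heτ, rfl⟩)
  · rintro (rfl | rfl | ⟨p, hp, hpi, rfl⟩)
    · refine ⟨(hS i (hrim i hi).1).mpr (Or.inl rfl), fun z hz => ?_⟩
      rcases Sym2.mem_iff.mp hz with rfl | rfl
      exacts [hfan.u_mem (hrim i hi).1, hfan.center_mem]
    · refine ⟨Sym2.eq_swap ▸ (hS (i + 1) (hrim i hi).2).mpr (Or.inr rfl), fun z hz => ?_⟩
      rcases Sym2.mem_iff.mp hz with rfl | rfl
      exacts [hfan.center_mem, hfan.u_mem (hrim i hi).2]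
    · refine ⟨(hR p hp).mpr hpi, fun z hz => ?_⟩
      rcases Sym2.mem_iff.mp hz with rfl | rfl
      exacts [hfan.u_mem (hrim p hp).1, hfan.u_mem (hrim p hp).2]

end IsFan

theorem stmt_9_general {V : Type*} [DecidableEq V] (G : SimpleGraph V)
    (r : ℕ) (hr : 2 ≤ r) (w x : V) (u : ℕ → V) (F : Set V)
    (hF : F = insert w (u '' Set.Icc 1 r))
    (hinj : ∀ i ∈ Set.Icc 1 r, ∀ j ∈ Set.Icc 1 r, u i = u j → i = j)
    (hwu : ∀ i ∈ Set.Icc 1 r, u i ≠ w)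
    (hu0 : u 0 ∉ F) (hx : x ∉ F) (hur1 : u (r + 1) ∉ F)
    (hin : ∀ a ∈ F, ∀ b ∈ F, (G.Adj a b ↔
      (∃ i ∈ Set.Icc 1 r, (a = w ∧ b = u i) ∨ (a = u i ∧ b = w)) ∨
      (∃ i ∈ Set.Icc 1 (r - 1), (a = u i ∧ b = u (i + 1)) ∨ (a = u (i + 1) ∧ b = u i))))
    (hout : ∀ a ∈ F, ∀ b ∉ F, (G.Adj a b ↔
      (a = u 1 ∧ b = u 0) ∨ (a = w ∧ b = x) ∨ (a = u r ∧ b = u (r + 1))))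
    {v₀ : V} (τ : G.Walk v₀ v₀) (hτ : τ.IsHamiltonianCycle)
    (hj : s(u 0, u 1) ∈ τ.edges) (hl : s(u r, u (r + 1)) ∈ τ.edges) :
    ∃ i ∈ Set.Icc 1 (r - 1), ∀ e : Sym2 V, (e ∈ τ.edges ∧ ∀ z ∈ e, z ∈ F) ↔
      (e = s(u i, w) ∨ e = s(w, u (i + 1)) ∨
        ∃ p ∈ Set.Icc 1 (r - 1), p ≠ i ∧ e = s(u p, u (p + 1))) := by
  have hfan : IsFan G r w x u F := ⟨hr, hF, hinj, hwu, hu0, hx, hur1, hin, hout⟩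
  have hsupp : ∀ v ∈ F, v ∈ τ.support := fun v _ => hτ.mem_support v
  obtain ⟨a, ha, b, hb, hab⟩ := hfan.exists_spoke_indices hτ.isCycle hsupp
  obtain ⟨i, hi, hS, hR⟩ := exists_centre_traversal (S := fun p => s(u p, w) ∈ τ.edges)
    (R := fun p => s(u p, u (p + 1)) ∈ τ.edges) hj hl
    (fun p hp => by
      rw [Nat.sub_add_cancel (mem_Icc.mp hp).1]
      exact hfan.spoke_notMem_edges_iff hτ.isCycle hsupp hp) ha hb hab
  exact ⟨i, hi, hfan.inside_edges_iff hS hR hi⟩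

/-- Centre-traversal of a fan.  Let `G` contain a fan on distinct vertices
`w, u 1, …, u r` (`r ≥ 2`): the edges of `G` inside `F = {w, u 1, …, u r}` are
exactly the spokes `(w, u i)` (`1 ≤ i ≤ r`) and the rim edges `(u i, u (i+1))`
(`1 ≤ i ≤ r-1`), and the only edges leaving `F` are `j = (u 0, u 1)`, `k = (x, w)`
and `l = (u r, u (r+1))` with `u 0, x, u (r+1) ∉ F`.  Then for every Hamiltonian
cycle `τ` containing `j` and `l`, there is an index `1 ≤ i ≤ r-1` such that the
edges of `τ` with both endpoints in `F` are exactly the rim edges other than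
`(u i, u (i+1))`, together with the two spokes `(u i, w)` and `(w, u (i+1))`. -/
theorem stmt_9 {V : Type*} [Fintype V] [DecidableEq V] (G : SimpleGraph V)
    (r : ℕ) (hr : 2 ≤ r) (w x : V) (u : ℕ → V) (F : Set V)
    (hF : F = insert w (u '' Set.Icc 1 r))
    (hinj : ∀ i ∈ Set.Icc 1 r, ∀ j ∈ Set.Icc 1 r, u i = u j → i = j)
    (hwu : ∀ i ∈ Set.Icc 1 r, u i ≠ w)
    (hu0 : u 0 ∉ F) (hx : x ∉ F) (hur1 : u (r + 1) ∉ F)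
    (hin : ∀ a ∈ F, ∀ b ∈ F, (G.Adj a b ↔
      (∃ i ∈ Set.Icc 1 r, (a = w ∧ b = u i) ∨ (a = u i ∧ b = w)) ∨
      (∃ i ∈ Set.Icc 1 (r - 1), (a = u i ∧ b = u (i + 1)) ∨ (a = u (i + 1) ∧ b = u i))))
    (hout : ∀ a ∈ F, ∀ b ∉ F, (G.Adj a b ↔
      (a = u 1 ∧ b = u 0) ∨ (a = w ∧ b = x) ∨ (a = u r ∧ b = u (r + 1))))
    {v₀ : V} (τ : G.Walk v₀ v₀) (hτ : τ.IsHamiltonianCycle)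
    (hj : s(u 0, u 1) ∈ τ.edges) (hl : s(u r, u (r + 1)) ∈ τ.edges) :
    ∃ i ∈ Set.Icc 1 (r - 1), ∀ e : Sym2 V, (e ∈ τ.edges ∧ ∀ z ∈ e, z ∈ F) ↔
      (e = s(u i, w) ∨ e = s(w, u (i + 1)) ∨
        ∃ p ∈ Set.Icc 1 (r - 1), p ≠ i ∧ e = s(u p, u (p + 1))) :=
  stmt_9_general G r hr w x u F hF hinj hwu hu0 hx hur1 hin hout τ hτ hj hl
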